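/- arXiv:2503.16210 — 8 statements merged into one kernel-verified Lean document; each statement's English description precedes it below -/
import Mathlib

section
/- Let X be a nontrivial real Banach space, T : X →L[ℝ] X a bounded linear operator, and ℓ ≥ 1 an integer. Then the Bochner integral representation of the ℓ-th phi-function agrees with its power series: (1/(ℓ−1)!) · ∫_{θ∈[0,1]} θ^{ℓ−1} · exp((1−θ)·T) dθ = ∑_{k=0}^{∞} T^k/(ℓ+k)!, where the series converges in operator norm. -/
/-!
Expand `exp ((1 - θ) • T) = ∑ (1 - θ) ^ k / k! • T ^ k` and integrate term by term against
`θ ^ (ℓ - 1)`; the interchange is dominated convergence, the terms being bounded by the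
norm-summable exponential series of `T`. Each term is a Beta integral,
`∫₀¹ θ ^ m (1 - θ) ^ k = m! k! / (m + k + 1)!` with `m = ℓ - 1`, which turns
the coefficient of `T ^ k` into `(ℓ - 1)! / (ℓ + k)!`.
-/

open MeasureTheory intervalIntegral
open scoped Nat

/-- The operator `φ_ℓ(T) = ∑_{k=0}^∞ T^k / (ℓ+k)!` (for `ℓ = 0` this is `exp T`). -/
noncomputable def phi {X : Type*} [NormedAddCommGroup X] [NormedSpace ℝ X] [CompleteSpace X]
    (ℓ : ℕ) (T : X →L[ℝ] X) : X →L[ℝ] X :=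
  ∑' k : ℕ, (((ℓ + k)! : ℝ)⁻¹) • T ^ k

theorem integral_pow_mul_one_sub_pow (a b : ℕ) :
    ∫ x in (0:ℝ)..1, x ^ a * (1 - x) ^ b = (a ! * b ! : ℝ) / (a + b + 1)! := by
  have hbeta := Complex.betaIntegral_eq_Gamma_mul_div (a + 1) (b + 1)
    (by simpa using a.cast_add_one_pos) (by simpa using b.cast_add_one_pos)
  rw [show (a + 1 + (b + 1) : ℂ) = ((a + b + 1 : ℕ) : ℂ) + 1 by push_cast; ring,
    Complex.Gamma_nat_eq_factorial, Complex.Gamma_nat_eq_factorial,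
    Complex.Gamma_nat_eq_factorial, Complex.betaIntegral] at hbeta
  simp only [add_sub_cancel_right, Complex.cpow_natCast] at hbeta
  rw [← Complex.ofReal_inj, ← intervalIntegral.integral_ofReal]
  push_cast at hbeta ⊢
  exact hbeta

section NormedAlgebra

variable {𝔸 : Type*} [NormedRing 𝔸] [NormedAlgebra ℝ 𝔸] [CompleteSpace 𝔸]

theorem hasSum_pow_smul_exp_one_sub_smul (m : ℕ) (T : 𝔸) (θ : ℝ) :
    HasSum (fun k : ℕ => (θ ^ m * (1 - θ) ^ k / k !) • T ^ k)
      (θ ^ m • NormedSpace.exp ((1 - θ) • T)) := by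
  convert (NormedSpace.exp_series_hasSum_exp' (𝕂 := ℝ) ((1 - θ) • T)).const_smul (θ ^ m)
    using 2 with k
  rw [smul_pow, smul_smul, smul_smul]
  ring_nf

theorem hasSum_integral_pow_smul_exp_one_sub_smul (m : ℕ) (T : 𝔸) :
    HasSum (fun k : ℕ => ((m ! : ℝ) / (m + k + 1)!) • T ^ k)
      (∫ θ in (0:ℝ)..1, θ ^ m • NormedSpace.exp ((1 - θ) • T)) := by
  have hterm (k : ℕ) : ∫ θ in (0:ℝ)..1, (θ ^ m * (1 - θ) ^ k / k !) • T ^ k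
      = ((m ! : ℝ) / (m + k + 1)!) • T ^ k := by
    rw [intervalIntegral.integral_smul_const, intervalIntegral.integral_div,
      integral_pow_mul_one_sub_pow]
    congr 1
    field_simp
  have hbound (k : ℕ) (θ : ℝ) (hθ : θ ∈ Set.uIoc 0 1) :
      ‖(θ ^ m * (1 - θ) ^ k / k !) • T ^ k‖ ≤ ‖((k ! : ℝ)⁻¹) • T ^ k‖ := by
    obtain ⟨hθ₀, hθ₁⟩ : 0 < θ ∧ θ ≤ 1 := by rwa [Set.uIoc_of_le zero_le_one] at hθ
    have hweight : ‖θ ^ m * (1 - θ) ^ k‖ ≤ 1 := by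
      rw [Real.norm_eq_abs, abs_of_nonneg (by bound)]
      exact mul_le_one₀ (pow_le_one₀ hθ₀.le hθ₁) (by bound)
        (pow_le_one₀ (by linarith) (by linarith))
    rw [norm_smul, norm_smul, div_eq_mul_inv, norm_mul]
    gcongr
    exact mul_le_of_le_one_left (norm_nonneg _) hweight
  simp_rw [← hterm]
  refine intervalIntegral.hasSum_integral_of_dominated_convergence
    (fun k _ => ‖((k ! : ℝ)⁻¹) • T ^ k‖) (fun k => ?_) (fun k => ae_of_all _ (hbound k))
    (ae_of_all _ fun _ _ => NormedSpace.norm_expSeries_summable' T) intervalIntegrable_const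
    (ae_of_all _ fun θ _ => hasSum_pow_smul_exp_one_sub_smul m T θ)
  exact (by fun_prop : Continuous fun θ : ℝ => (θ ^ m * (1 - θ) ^ k / k !) • T ^ k)
    |>.aestronglyMeasurable

theorem hasSum_inv_factorial_smul_pow_integral (m : ℕ) (T : 𝔸) :
    HasSum (fun k : ℕ => (((m + 1 + k)! : ℝ)⁻¹) • T ^ k)
      (((m ! : ℝ)⁻¹) • ∫ θ in (0:ℝ)..1, θ ^ m • NormedSpace.exp ((1 - θ) • T)) := by
  convert (hasSum_integral_pow_smul_exp_one_sub_smul m T).const_smul ((m ! : ℝ)⁻¹)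
    using 2 with k
  rw [smul_smul, add_right_comm, inv_mul_eq_div, div_div_cancel_left' (by positivity)]

end NormedAlgebra

theorem stmt0_general {X : Type*} [NormedAddCommGroup X] [NormedSpace ℝ X] [CompleteSpace X]
    (T : X →L[ℝ] X) (ℓ : ℕ) (hℓ : 1 ≤ ℓ) :
    Summable (fun k : ℕ => (((ℓ + k)! : ℝ)⁻¹) • T ^ k) ∧
    (((ℓ - 1)! : ℝ)⁻¹) •
        (∫ θ in (0:ℝ)..1, θ ^ (ℓ - 1) • NormedSpace.exp ((1 - θ) • T)) = phi ℓ T := by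
  obtain ⟨m, rfl⟩ := Nat.exists_eq_add_of_le' hℓ
  have h := hasSum_inv_factorial_smul_pow_integral m T
  rw [Nat.add_sub_cancel]
  exact ⟨h.summable, h.tsum_eq.symm⟩

theorem stmt0 {X : Type*} [NormedAddCommGroup X] [NormedSpace ℝ X] [CompleteSpace X]
    [Nontrivial X] (T : X →L[ℝ] X) (ℓ : ℕ) (hℓ : 1 ≤ ℓ) :
    Summable (fun k : ℕ => (((ℓ + k)! : ℝ)⁻¹) • T ^ k) ∧
    (((ℓ - 1)! : ℝ)⁻¹) •
        (∫ θ in (0:ℝ)..1, θ ^ (ℓ - 1) • NormedSpace.exp ((1 - θ) • T)) = phi ℓ T :=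
  stmt0_general T ℓ hℓ
end

section
/- Let X be a real Banach space, L : X →L[ℝ] X a bounded linear operator, and τ ≥ 0. Then τ · φ₁(τ·L) = ∫_{s∈[0,τ]} exp((τ−s)·L) ds, where the integral is a Bochner integral in operator norm. -/
open MeasureTheory intervalIntegral
open scoped Nat

open NormedSpace

lemma abs_le_abs_of_mem_uIoc_zero {t τ : ℝ} (ht : t ∈ Set.uIoc 0 τ) : |t| ≤ |τ| := by
  rcases le_total 0 τ with hτ | hτ
  · rw [Set.uIoc_of_le hτ] at ht
    rw [abs_of_pos ht.1, abs_of_nonneg hτ]; exact ht.2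
  · rw [Set.uIoc_of_ge hτ] at ht
    rw [abs_of_nonpos ht.2, abs_of_nonpos hτ]; linarith [ht.1]

lemma integral_pow_div_factorial (τ : ℝ) (k : ℕ) :
    ∫ t in (0 : ℝ)..τ, t ^ k / k ! = τ ^ (k + 1) / (k + 1)! := by
  rw [intervalIntegral.integral_div, integral_pow, Nat.factorial_succ]
  push_cast
  rw [zero_pow k.succ_ne_zero, sub_zero, div_div, mul_comm]

section

variable {A : Type*} [NormedRing A] [NormedAlgebra ℝ A] [CompleteSpace A]

lemma hasSum_exp_smul (a : A) (t : ℝ) :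
    HasSum (fun k : ℕ => (t ^ k / k !) • a ^ k) (exp (t • a)) := by
  convert exp_series_hasSum_exp' (𝕂 := ℝ) (t • a) using 2 with k
  rw [smul_pow, smul_smul, div_eq_inv_mul]

lemma hasSum_integral_exp_smul (a : A) (τ : ℝ) :
    HasSum (fun k : ℕ => (τ ^ (k + 1) / (k + 1)!) • a ^ k) (∫ t in (0 : ℝ)..τ, exp (t • a)) := by
  have hterm (k : ℕ) :
      ∫ t in (0 : ℝ)..τ, (t ^ k / k !) • a ^ k = (τ ^ (k + 1) / (k + 1)!) • a ^ k := by
    rw [intervalIntegral.integral_smul_const, integral_pow_div_factorial]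
  simp_rw [← hterm]
  refine hasSum_integral_of_dominated_convergence (fun k _ => ‖(|τ| ^ k / k !) • a ^ k‖)
    (fun k => (by fun_prop : Continuous fun t : ℝ => (t ^ k / k !) • a ^ k).aestronglyMeasurable)
    (fun k => ae_of_all _ fun t ht => ?_) (ae_of_all _ fun _ _ => ?_)
    intervalIntegrable_const (ae_of_all _ fun t _ => hasSum_exp_smul a t)
  · have := abs_le_abs_of_mem_uIoc_zero ht
    simp only [norm_smul, Real.norm_eq_abs, abs_div, abs_pow, Nat.abs_cast, abs_abs]
    gcongr
  · simpa only [smul_pow, smul_smul, ← div_eq_inv_mul] using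
      norm_expSeries_summable' (𝕂 := ℝ) (|τ| • a)

end

lemma smul_phi_one_smul {X : Type*} [NormedAddCommGroup X] [NormedSpace ℝ X] [CompleteSpace X]
    (T : X →L[ℝ] X) (τ : ℝ) :
    τ • phi 1 (τ • T) = ∑' k : ℕ, (τ ^ (k + 1) / (k + 1)!) • T ^ k := by
  rw [phi, ← tsum_const_smul'']
  congr with k : 1
  rw [smul_pow, smul_smul, smul_smul, add_comm 1 k]
  congr 1
  rw [Nat.factorial_succ]
  push_cast
  field_simp
  ring

theorem stmt3_general {X : Type*} [NormedAddCommGroup X] [NormedSpace ℝ X] [CompleteSpace X]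
    (L : X →L[ℝ] X) (τ : ℝ) :
    τ • phi 1 (τ • L) = ∫ s in (0:ℝ)..τ, NormedSpace.exp ((τ - s) • L) := by
  calc τ • phi 1 (τ • L) = ∑' k : ℕ, (τ ^ (k + 1) / (k + 1)!) • L ^ k := smul_phi_one_smul L τ
    _ = ∫ t in (0 : ℝ)..τ, exp (t • L) := (hasSum_integral_exp_smul L τ).tsum_eq
    _ = ∫ s in (0 : ℝ)..τ, exp ((τ - s) • L) := by
      simpa using (integral_comp_sub_left (fun t => exp (t • L)) (a := 0) (b := τ) τ).symm

theorem stmt3 {X : Type*} [NormedAddCommGroup X] [NormedSpace ℝ X] [CompleteSpace X]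
    (L : X →L[ℝ] X) (τ : ℝ) (hτ : 0 ≤ τ) :
    τ • phi 1 (τ • L) = ∫ s in (0:ℝ)..τ, NormedSpace.exp ((τ - s) • L) :=
  stmt3_general L τ
end

section
/- Let X be a real Banach space, let A, B : X →L[ℝ] X be bounded linear operators that commute (A ∘ B = B ∘ A), and let τ > 0. Then τ·φ₁(τ·(A+B)) − τ·exp((τ/2)·A) ∘ φ₁(τ·B) = ∫_{s∈[0,τ]} ∫_{σ∈[s,τ/2]} exp((τ−s)·B) ∘ exp((τ−σ)·A) ∘ A dσ ds, where the inner integral over σ from s to τ/2 is an oriented (interval) integral. -/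
/-!
Integrate in `σ` first: since `d/dσ exp((τ - σ)A) = -exp((τ - σ)A) A`, the inner integral is
`exp((τ - s)B) (exp((τ - s)A) - exp((τ/2)A))`, and because `A` and `B` commute this equals
`exp((τ - s)(A + B)) - exp((τ/2)A) exp((τ - s)B)`. Both outer integrals are then instances of
`∫₀^τ exp(sT) ds = τ φ₁(τT)`, which follows by integrating the exponential series term by term.
-/

open MeasureTheory intervalIntegral
open scoped Nat

open NormedSpace Set

section BanachAlgebra

variable {𝔸 : Type*} [NormedRing 𝔸] [NormedAlgebra ℝ 𝔸] [CompleteSpace 𝔸]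

theorem intervalIntegral.integral_const_mul_of_intervalIntegrable {f : ℝ → 𝔸} {a b : ℝ}
    (hf : IntervalIntegrable f volume a b) (c : 𝔸) :
    ∫ x in a..b, c * f x = c * ∫ x in a..b, f x :=
  (ContinuousLinearMap.mul ℝ 𝔸 c).intervalIntegral_comp_comm hf

theorem integral_exp_sub_smul_mul (a : 𝔸) (τ s t : ℝ) :
    ∫ σ in s..t, exp ((τ - σ) • a) * a = exp ((τ - s) • a) - exp ((τ - t) • a) := by
  -- `exp_continuous` and `exp_add_of_commute` are stated for normed `ℚ`-algebras.
  let +nondep : NormedAlgebra ℚ 𝔸 := .restrictScalars ℚ ℝ 𝔸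
  have hderiv (σ : ℝ) :
      HasDerivAt (fun u : ℝ => -exp ((τ - u) • a)) (exp ((τ - σ) • a) * a) σ := by
    have := ((hasDerivAt_exp_smul_const a (τ - σ)).scomp σ
      ((hasDerivAt_id σ).const_sub τ)).neg
    simpa [Function.comp_def, Pi.neg_def] using this
  rw [integral_eq_sub_of_hasDerivAt (fun σ _ => hderiv σ)
    ((by fun_prop : Continuous fun σ : ℝ => exp ((τ - σ) • a) * a).intervalIntegrable _ _)]
  abel

theorem exp_smul_mul_sub_exp_smul_of_commute {a b : 𝔸} (h : Commute a b) (r c : ℝ) :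
    exp (r • b) * (exp (r • a) - exp (c • a)) =
      exp (r • (a + b)) - exp (c • a) * exp (r • b) := by
  let +nondep : NormedAlgebra ℚ 𝔸 := .restrictScalars ℚ ℝ 𝔸
  have hr : Commute (r • a) (r • b) := (h.smul_left r).smul_right r
  rw [mul_sub, smul_add, exp_add_of_commute hr, hr.symm.exp.eq,
    ((h.symm.smul_left r).smul_right c).exp.eq]

end BanachAlgebra

section Phi

variable {X : Type*} [NormedAddCommGroup X] [NormedSpace ℝ X] [CompleteSpace X]

theorem integral_exp_smul_eq_smul_phi_one (T : X →L[ℝ] X) (τ : ℝ) :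
    ∫ s in (0 : ℝ)..τ, exp (s • T) = τ • phi 1 (τ • T) := by
  let term (k : ℕ) : C(ℝ, X →L[ℝ] X) := ⟨fun s => (k ! : ℝ)⁻¹ • (s • T) ^ k, by fun_prop⟩
  have hterm_norm (k : ℕ) (s : ℝ) : ‖term k s‖ = (k ! : ℝ)⁻¹ * |s| ^ k * ‖T ^ k‖ := by
    simp [term, smul_pow, norm_smul, mul_assoc]
  have hsummable : Summable fun k =>
      ‖(term k).restrict (⟨uIcc 0 τ, isCompact_uIcc⟩ : TopologicalSpace.Compacts ℝ)‖ := by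
    refine .of_nonneg_of_le (fun _ => by positivity) (fun k => ?_)
      (norm_expSeries_summable' (𝕂 := ℝ) (|τ| • T))
    refine (ContinuousMap.norm_le _ (norm_nonneg _)).2 fun ⟨s, hs⟩ => ?_
    have hsτ : |s| ≤ |τ| := by simpa using abs_sub_left_of_mem_uIcc hs
    change ‖term k s‖ ≤ ‖term k |τ|‖
    rw [hterm_norm, hterm_norm, abs_abs]
    gcongr
  have hterm_integral (k : ℕ) :
      ∫ s in (0 : ℝ)..τ, term k s = τ • (((1 + k)! : ℝ)⁻¹ • (τ • T) ^ k) := by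
    simp only [term, ContinuousMap.coe_mk, smul_pow, smul_smul,
      intervalIntegral.integral_smul_const]
    rw [intervalIntegral.integral_const_mul, integral_pow]
    congr 1
    rw [add_comm 1 k, Nat.factorial_succ]
    push_cast
    field_simp
    ring
  calc ∫ s in (0 : ℝ)..τ, exp (s • T) = ∫ s in (0 : ℝ)..τ, ∑' k, term k s := by
        simp only [exp_eq_tsum ℝ]; rfl
    _ = ∑' k, ∫ s in (0 : ℝ)..τ, term k s :=
        (tsum_intervalIntegral_eq_of_summable_norm hsummable).symm
    _ = τ • phi 1 (τ • T) := by simp only [hterm_integral, phi]; rw [tsum_const_smul'']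

theorem integral_exp_sub_smul_eq_smul_phi_one (T : X →L[ℝ] X) (τ : ℝ) :
    ∫ s in (0 : ℝ)..τ, exp ((τ - s) • T) = τ • phi 1 (τ • T) := by
  rw [integral_comp_sub_left (fun u => exp (u • T)), sub_self, sub_zero,
    integral_exp_smul_eq_smul_phi_one]

end Phi

theorem stmt6_general {X : Type*} [NormedAddCommGroup X] [NormedSpace ℝ X] [CompleteSpace X]
    (A B : X →L[ℝ] X) (hcomm : A.comp B = B.comp A) (τ : ℝ) :
    τ • phi 1 (τ • (A + B)) - τ • (NormedSpace.exp ((τ/2) • A)).comp (phi 1 (τ • B)) =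
      ∫ s in (0:ℝ)..τ, ∫ σ in s..(τ/2),
        (NormedSpace.exp ((τ - s) • B)).comp
          ((NormedSpace.exp ((τ - σ) • A)).comp A) := by
  let +nondep : NormedAlgebra ℚ (X →L[ℝ] X) := .restrictScalars ℚ ℝ (X →L[ℝ] X)
  have hcont (T : X →L[ℝ] X) : Continuous fun s : ℝ => exp ((τ - s) • T) := by fun_prop
  have hinner (s : ℝ) :
      ∫ σ in s..(τ/2), (exp ((τ - s) • B)).comp ((exp ((τ - σ) • A)).comp A)
        = exp ((τ - s) • (A + B)) - exp ((τ / 2) • A) * exp ((τ - s) • B) := by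
    simp only [← ContinuousLinearMap.mul_def]
    rw [integral_const_mul_of_intervalIntegrable (((hcont A).intervalIntegrable _ _).mul_const A),
      integral_exp_sub_smul_mul A τ s (τ / 2), sub_half,
      exp_smul_mul_sub_exp_smul_of_commute hcomm]
  simp only [hinner]
  rw [integral_sub ((hcont (A + B)).intervalIntegrable _ _)
      (((hcont B).intervalIntegrable _ _).const_mul _),
    integral_const_mul_of_intervalIntegrable ((hcont B).intervalIntegrable _ _),
    integral_exp_sub_smul_eq_smul_phi_one, integral_exp_sub_smul_eq_smul_phi_one, mul_smul_comm,
    ContinuousLinearMap.mul_def]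

theorem stmt6 {X : Type*} [NormedAddCommGroup X] [NormedSpace ℝ X] [CompleteSpace X]
    (A B : X →L[ℝ] X) (hcomm : A.comp B = B.comp A) (τ : ℝ) (hτ : 0 < τ) :
    τ • phi 1 (τ • (A + B)) - τ • (NormedSpace.exp ((τ/2) • A)).comp (phi 1 (τ • B)) =
      ∫ s in (0:ℝ)..τ, ∫ σ in s..(τ/2),
        (NormedSpace.exp ((τ - s) • B)).comp
          ((NormedSpace.exp ((τ - σ) • A)).comp A) :=
  stmt6_general A B hcomm τ
end

section
/- Let X be a real Banach space and let A, B : X →L[ℝ] X be bounded linear operators that commute (A ∘ B = B ∘ A). Then there exists a constant C ≥ 0 such that for all τ ∈ [0, 1], ‖τ·φ₁(τ·(A+B)) − τ·exp((τ/2)·A) ∘ φ₁(τ·B) − (τ³/24)·(A ∘ A + 2·(B ∘ A))‖ ≤ C·τ⁴. -/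
open MeasureTheory intervalIntegral
open scoped Nat

/-!
Expand both `φ₁(τ(A+B))` and the Cauchy product `exp(τA/2) φ₁(τB)` as power series in `τ`
with coefficients independent of `τ`. The coefficients of the difference have summable norms,
the coefficients of `τ⁰` and `τ¹` vanish, and the one of `τ²` is `(A² + 2BA)/24` because `A`
and `B` commute. On `[0, 1]` the tail from `τ³` on is then bounded by `τ³` times the sum of the
norms of its coefficients; the extra factor `τ` in front gives `τ⁴`.
-/

open Finset

section PowerSeries

variable {V : Type*} [NormedAddCommGroup V] [NormedSpace ℝ V] [CompleteSpace V]

theorem norm_tsum_pow_smul_sub_sum_range_le {c : ℕ → V} (hc : Summable (‖c ·‖))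
    {τ : ℝ} (hτ₀ : 0 ≤ τ) (hτ₁ : τ ≤ 1) (n : ℕ) :
    ‖∑' j, τ ^ j • c j - ∑ j ∈ range n, τ ^ j • c j‖ ≤ (∑' j, ‖c (j + n)‖) * τ ^ n := by
  have hc' : Summable fun j => ‖c (j + n)‖ := (summable_nat_add_iff n).mpr hc
  have hterm : ∀ j, ‖τ ^ (j + n) • c (j + n)‖ ≤ ‖c (j + n)‖ * τ ^ n := fun j => by
    rw [norm_smul, Real.norm_of_nonneg (by positivity), pow_add, mul_comm]
    gcongr
    exact mul_le_of_le_one_left (by positivity) (pow_le_one₀ hτ₀ hτ₁)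
  have hsum : Summable fun j => ‖τ ^ (j + n) • c (j + n)‖ :=
    (hc'.mul_right _).of_nonneg_of_le (fun _ => norm_nonneg _) hterm
  have hsplit : ∑ j ∈ range n, τ ^ j • c j + ∑' j, τ ^ (j + n) • c (j + n)
      = ∑' j, τ ^ j • c j :=
    ((summable_nat_add_iff (f := fun j => τ ^ j • c j) n).mp hsum.of_norm).sum_add_tsum_nat_add n
  rw [← hsplit, add_sub_cancel_left, ← tsum_mul_right]
  exact (norm_tsum_le_tsum_norm hsum).trans (hsum.tsum_le_tsum hterm (hc'.mul_right _))

end PowerSeries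

section PhiSeries

variable {𝔸 : Type*} [NormedRing 𝔸] [NormedAlgebra ℝ 𝔸]

noncomputable def phiCoeff (ℓ : ℕ) (a : 𝔸) (k : ℕ) : 𝔸 := (((ℓ + k)! : ℝ)⁻¹) • a ^ k

theorem phiCoeff_smul (ℓ : ℕ) (τ : ℝ) (a : 𝔸) (k : ℕ) :
    phiCoeff ℓ (τ • a) k = τ ^ k • phiCoeff ℓ a k := by
  simp only [phiCoeff, smul_pow, smul_comm (τ ^ k)]

theorem norm_phiCoeff_le (ℓ : ℕ) (a : 𝔸) (k : ℕ) :
    ‖phiCoeff ℓ a k‖ ≤ ‖((k ! : ℝ)⁻¹) • a ^ k‖ := by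
  simp only [phiCoeff, norm_smul]
  gcongr
  rw [norm_inv, norm_inv, Real.norm_natCast, Real.norm_natCast]
  gcongr
  omega

theorem summable_norm_phiCoeff (ℓ : ℕ) (a : 𝔸) : Summable (‖phiCoeff ℓ a ·‖) :=
  (NormedSpace.norm_expSeries_summable' (𝕂 := ℝ) a).of_nonneg_of_le (fun _ => norm_nonneg _)
    (norm_phiCoeff_le ℓ a)

theorem exp_eq_tsum_phiCoeff_zero (a : 𝔸) : NormedSpace.exp a = ∑' k, phiCoeff 0 a k := by
  simp only [NormedSpace.exp_eq_tsum (𝕂 := ℝ), phiCoeff, zero_add]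

theorem sum_antidiagonal_phiCoeff_smul_mul (ℓ m : ℕ) (τ : ℝ) (a b : 𝔸) (n : ℕ) :
    ∑ kl ∈ antidiagonal n, phiCoeff ℓ (τ • a) kl.1 * phiCoeff m (τ • b) kl.2
      = τ ^ n • ∑ kl ∈ antidiagonal n, phiCoeff ℓ a kl.1 * phiCoeff m b kl.2 := by
  rw [smul_sum]
  refine sum_congr rfl fun kl hkl => ?_
  rw [phiCoeff_smul, phiCoeff_smul, smul_mul_smul_comm, ← pow_add, mem_antidiagonal.mp hkl]

noncomputable def splittingDefect (a b : 𝔸) (n : ℕ) : 𝔸 :=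
  phiCoeff 1 (a + b) n
    - ∑ kl ∈ antidiagonal n, phiCoeff 0 ((2 : ℝ)⁻¹ • a) kl.1 * phiCoeff 1 b kl.2

theorem summable_norm_splittingDefect (a b : 𝔸) : Summable (‖splittingDefect a b ·‖) :=
  ((summable_norm_phiCoeff 1 _).add (summable_norm_sum_mul_antidiagonal_of_summable_norm
    (summable_norm_phiCoeff 0 _) (summable_norm_phiCoeff 1 _))).of_nonneg_of_le
    (fun _ => norm_nonneg _) fun _ => norm_sub_le _ _

theorem tsum_phiCoeff_sub_exp_mul_tsum_phiCoeff [CompleteSpace 𝔸] (τ : ℝ) (a b : 𝔸) :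
    ∑' k, phiCoeff 1 (τ • (a + b)) k
        - NormedSpace.exp ((τ / 2) • a) * ∑' k, phiCoeff 1 (τ • b) k
      = ∑' n, τ ^ n • splittingDefect a b n := by
  have hhalf : (τ / 2) • a = τ • (2 : ℝ)⁻¹ • a := by rw [smul_smul, div_eq_mul_inv]
  have hexp := summable_norm_phiCoeff 0 (τ • (2 : ℝ)⁻¹ • a)
  have hphi := summable_norm_phiCoeff 1 (τ • b)
  have hprod := summable_norm_sum_mul_antidiagonal_of_summable_norm hexp hphi
  rw [exp_eq_tsum_phiCoeff_zero, hhalf,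
    tsum_mul_tsum_eq_tsum_sum_antidiagonal_of_summable_norm hexp hphi,
    ← (summable_norm_phiCoeff 1 (τ • (a + b))).of_norm.tsum_sub hprod.of_norm]
  refine tsum_congr fun n => ?_
  rw [sum_antidiagonal_phiCoeff_smul_mul, phiCoeff_smul, splittingDefect, smul_sub]

theorem sum_range_three_splittingDefect {a b : 𝔸} (hab : Commute a b) (τ : ℝ) :
    ∑ n ∈ range 3, τ ^ n • splittingDefect a b n
      = τ ^ 2 • (24 : ℝ)⁻¹ • (a * a + (2 : ℝ) • (b * a)) := by
  simp only [sum_range_succ, sum_range_zero, splittingDefect, phiCoeff, Nat.antidiagonal_succ]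
  norm_num [Nat.factorial, smul_pow, sq, add_mul, mul_add, hab.eq]
  module

end PhiSeries

theorem phi_eq_tsum_phiCoeff {X : Type*} [NormedAddCommGroup X] [NormedSpace ℝ X]
    [CompleteSpace X] (ℓ : ℕ) (T : X →L[ℝ] X) : phi ℓ T = ∑' k, phiCoeff ℓ T k := rfl

theorem stmt8 {X : Type*} [NormedAddCommGroup X] [NormedSpace ℝ X] [CompleteSpace X]
    (A B : X →L[ℝ] X) (hcomm : A.comp B = B.comp A) :
    ∃ C : ℝ, 0 ≤ C ∧ ∀ τ ∈ Set.Icc (0:ℝ) 1,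
      ‖τ • phi 1 (τ • (A + B)) - τ • (NormedSpace.exp ((τ/2) • A)).comp (phi 1 (τ • B))
        - (τ^3/24) • (A.comp A + (2:ℝ) • B.comp A)‖ ≤ C * τ^4 := by
  refine ⟨∑' j, ‖splittingDefect A B (j + 3)‖, tsum_nonneg fun _ => norm_nonneg _, ?_⟩
  rintro τ ⟨hτ₀, hτ₁⟩
  have hsplit : τ • phi 1 (τ • (A + B)) - τ • (NormedSpace.exp ((τ/2) • A)).comp (phi 1 (τ • B))
        - (τ^3/24) • (A.comp A + (2:ℝ) • B.comp A)
      = τ • (∑' n, τ ^ n • splittingDefect A B n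
        - ∑ n ∈ range 3, τ ^ n • splittingDefect A B n) := by
    rw [sum_range_three_splittingDefect (hcomm : Commute A B),
      ← tsum_phiCoeff_sub_exp_mul_tsum_phiCoeff, phi_eq_tsum_phiCoeff, phi_eq_tsum_phiCoeff,
      ← ContinuousLinearMap.mul_def, ← ContinuousLinearMap.mul_def,
      ← ContinuousLinearMap.mul_def]
    module
  have hrem := norm_tsum_pow_smul_sub_sum_range_le (summable_norm_splittingDefect A B) hτ₀ hτ₁ 3
  rw [hsplit, norm_smul, Real.norm_of_nonneg hτ₀]
  calc τ * _ ≤ τ * ((∑' j, ‖splittingDefect A B (j + 3)‖) * τ ^ 3) := by gcongr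
    _ = _ := by ring
end

section
/- Let X be a real Banach space, L : X →L[ℝ] X a bounded linear operator, and τ > 0. Then τ·φ₁(τ·L) − τ·exp((τ/2)·L) = ∫_{s∈[0,τ]} ∫_{σ∈[0,s]} ∫_{ξ∈[τ/2,σ]} exp((τ−ξ)·L) ∘ L ∘ L dξ dσ ds + (τ³/4) · exp((τ/2)·L) ∘ φ₂((τ/2)·L) ∘ L ∘ L, where the inner integral over ξ from τ/2 to σ is an oriented (interval) integral. -/
/-!
All three integrals are elementary: `-exp ((τ - ξ) • L) * L` is an antiderivative of
`exp ((τ - ξ) • L) * L * L`, and termwise integration of the exponential series gives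
`∫₀^τ exp (u • L) du = τ • φ₁(τ • L)`. The triple integral thus equals
`(τ²/2) E L - τ exp (τ • L) + τ φ₁(τ • L)` with `E = exp ((τ/2) • L)`, and the claim follows by
writing `exp (τ • L) = E * exp ((τ/2) • L)` and expanding the second factor as
`1 + T + φ₂(T) T²`, `T = (τ/2) • L`.
-/

open MeasureTheory intervalIntegral
open scoped Nat

open NormedSpace

theorem Continuous.exp_smul_const {α 𝔸 : Type*} [TopologicalSpace α] [NormedRing 𝔸]
    [NormedAlgebra ℝ 𝔸] [CompleteSpace 𝔸] {f : α → ℝ} (hf : Continuous f) (x : 𝔸) :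
    Continuous fun a => exp (f a • x) :=
  (differentiable_exp_smul_const ℝ x).continuous.comp hf

section Exp

variable {𝔸 : Type*} [NormedRing 𝔸] [NormedAlgebra ℝ 𝔸] [CompleteSpace 𝔸]

theorem integral_exp_sub_smul_mul_mul (x y : 𝔸) (τ a b : ℝ) :
    ∫ ξ in a..b, exp ((τ - ξ) • x) * x * y = (exp ((τ - a) • x) - exp ((τ - b) • x)) * y := by
  have hderiv (ξ : ℝ) :
      HasDerivAt (fun t : ℝ => -exp ((τ - t) • x) * y) (exp ((τ - ξ) • x) * x * y) ξ := by
    simpa [Function.comp_def] using ((hasDerivAt_exp_smul_const x (τ - ξ)).scomp ξ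
      ((hasDerivAt_id ξ).const_sub τ)).neg.mul_const y
  have hint : IntervalIntegrable (fun ξ : ℝ => exp ((τ - ξ) • x) * x * y) volume a b :=
    (((continuous_const.sub continuous_id).exp_smul_const x).mul continuous_const).mul
      continuous_const |>.intervalIntegrable a b
  rw [integral_eq_sub_of_hasDerivAt (fun ξ _ => hderiv ξ) hint, neg_mul, neg_mul, neg_sub_neg,
    sub_mul]

theorem integral_integral_integral_exp_sub_smul (x : 𝔸) (τ c : ℝ) :
    ∫ s in (0 : ℝ)..τ, ∫ σ in (0 : ℝ)..s, ∫ ξ in c..σ, exp ((τ - ξ) • x) * (x * x)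
      = (τ ^ 2 / 2) • (exp ((τ - c) • x) * x) - τ • exp (τ • x)
        + ∫ u in (0 : ℝ)..τ, exp (u • x) := by
  have hcont : Continuous fun s : ℝ => exp ((τ - s) • x) :=
    (continuous_const.sub continuous_id).exp_smul_const x
  have hinner (σ : ℝ) : ∫ ξ in c..σ, exp ((τ - ξ) • x) * (x * x)
      = exp ((τ - c) • x) * x - exp ((τ - σ) • x) * x := by
    simp only [← mul_assoc]
    rw [integral_exp_sub_smul_mul_mul, sub_mul]
  have hmiddle (s : ℝ) : ∫ σ in (0 : ℝ)..s, (exp ((τ - c) • x) * x - exp ((τ - σ) • x) * x)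
      = s • (exp ((τ - c) • x) * x) - (exp (τ • x) - exp ((τ - s) • x)) := by
    have hint : IntervalIntegrable (fun σ : ℝ => exp ((τ - σ) • x) * x) volume 0 s :=
      (hcont.mul continuous_const).intervalIntegrable _ _
    have hexp := integral_exp_sub_smul_mul_mul x 1 τ 0 s
    simp only [mul_one, sub_zero] at hexp
    rw [intervalIntegral.integral_sub intervalIntegrable_const hint,
      intervalIntegral.integral_const, hexp, sub_zero]
  have hlin : IntervalIntegrable (fun s : ℝ => s • (exp ((τ - c) • x) * x)) volume 0 τ :=
    (continuous_id.smul continuous_const).intervalIntegrable _ _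
  have hexp : IntervalIntegrable (fun s : ℝ => exp ((τ - s) • x)) volume 0 τ :=
    hcont.intervalIntegrable _ _
  simp only [hinner, hmiddle]
  rw [intervalIntegral.integral_sub hlin (intervalIntegrable_const.sub hexp),
    intervalIntegral.integral_smul_const, integral_id, intervalIntegral.integral_sub
    intervalIntegrable_const hexp, intervalIntegral.integral_const,
    intervalIntegral.integral_comp_sub_left (fun u => exp (u • x)), sub_self, sub_zero]
  module

end Exp

section Phi

variable {X : Type*} [NormedAddCommGroup X] [NormedSpace ℝ X] [CompleteSpace X]

theorem summable_phi (ℓ : ℕ) (T : X →L[ℝ] X) :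
    Summable fun k : ℕ => (((ℓ + k)! : ℝ)⁻¹) • T ^ k := by
  refine .of_norm_bounded (norm_expSeries_summable' (𝕂 := ℝ) T) fun k => ?_
  rw [norm_smul, norm_smul, norm_inv, norm_inv, Real.norm_natCast, Real.norm_natCast]
  gcongr
  exact Nat.le_add_left _ _

theorem phi_zero (T : X →L[ℝ] X) : phi 0 T = exp T := by
  simp [phi, exp_eq_tsum ℝ]

theorem phi_eq_inv_factorial_add_phi_succ_mul (ℓ : ℕ) (T : X →L[ℝ] X) :
    phi ℓ T = (ℓ ! : ℝ)⁻¹ • 1 + phi (ℓ + 1) T * T := by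
  rw [phi, (summable_phi ℓ T).tsum_eq_zero_add, phi, ← (summable_phi _ T).tsum_mul_right]
  simp only [add_zero, pow_zero, smul_mul_assoc, ← pow_succ, add_right_comm ℓ 1, add_assoc]

theorem exp_eq_one_add_add_phi_two_mul_sq (T : X →L[ℝ] X) :
    exp T = 1 + T + phi 2 T * T ^ 2 := by
  rw [← phi_zero, phi_eq_inv_factorial_add_phi_succ_mul, phi_eq_inv_factorial_add_phi_succ_mul]
  simp only [zero_add, Nat.factorial_zero, Nat.factorial_one, Nat.cast_one, inv_one, one_smul]
  noncomm_ring

theorem integral_exp_smul (L : X →L[ℝ] X) (τ : ℝ) :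
    ∫ u in (0 : ℝ)..τ, exp (u • L) = τ • phi 1 (τ • L) := by
  have hterm (n : ℕ) : ∫ u in (0 : ℝ)..τ, (n !⁻¹ : ℝ) • (u • L) ^ n
      = τ • (((1 + n)! : ℝ)⁻¹ • (τ • L) ^ n) := by
    calc ∫ u in (0 : ℝ)..τ, (n !⁻¹ : ℝ) • (u • L) ^ n
        = ∫ u in (0 : ℝ)..τ, ((n !⁻¹ : ℝ) * u ^ n) • L ^ n := by simp only [smul_pow, smul_smul]
      _ = τ • (((1 + n)! : ℝ)⁻¹ • (τ • L) ^ n) := by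
        rw [intervalIntegral.integral_smul_const, intervalIntegral.integral_const_mul, integral_pow,
          smul_pow, smul_smul, smul_smul]
        congr 1
        rw [add_comm 1 n, Nat.factorial_succ]
        push_cast
        field_simp
        ring
  have hsum : HasSum (fun n : ℕ => ∫ u in (0 : ℝ)..τ, (n !⁻¹ : ℝ) • (u • L) ^ n)
      (∫ u in (0 : ℝ)..τ, exp (u • L)) := by
    refine intervalIntegral.hasSum_integral_of_dominated_convergence
      (fun n _ => ‖(n !⁻¹ : ℝ) • (|τ| • L) ^ n‖) (fun n => ?_) (fun n => ?_)
      (.of_forall fun _ _ => norm_expSeries_summable' (𝕂 := ℝ) _) intervalIntegrable_const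
      (.of_forall fun u _ => ?_)
    · exact (by fun_prop : Continuous fun u : ℝ => (n !⁻¹ : ℝ) • (u • L) ^ n).aestronglyMeasurable
    · refine .of_forall fun u hu => ?_
      simp only [smul_pow, norm_smul]
      have hu' : |u| ≤ |τ| := by simpa using Set.abs_sub_left_of_mem_uIcc (Set.uIoc_subset_uIcc hu)
      gcongr
      simpa only [norm_pow, Real.norm_eq_abs, abs_abs] using pow_le_pow_left₀ (abs_nonneg u) hu' n
    · rw [exp_eq_tsum ℝ]
      exact (expSeries_summable' (𝕂 := ℝ) _).hasSum
  simp only [hterm] at hsum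
  exact hsum.unique ((summable_phi 1 _).hasSum.const_smul τ)

end Phi

theorem stmt9_general {X : Type*} [NormedAddCommGroup X] [NormedSpace ℝ X] [CompleteSpace X]
    (L : X →L[ℝ] X) (τ : ℝ) :
    τ • phi 1 (τ • L) - τ • NormedSpace.exp ((τ/2) • L) =
      (∫ s in (0:ℝ)..τ, ∫ σ in (0:ℝ)..s, ∫ ξ in (τ/2)..σ,
          (NormedSpace.exp ((τ - ξ) • L)).comp (L.comp L))
      + (τ^3/4) • ((NormedSpace.exp ((τ/2) • L)).comp
          ((phi 2 ((τ/2) • L)).comp (L.comp L))) := by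
  simp only [← ContinuousLinearMap.mul_def]
  have hsquare : exp (τ • L) = exp ((τ / 2) • L) *
      (1 + (τ / 2) • L + phi 2 ((τ / 2) • L) * ((τ / 2) • L) ^ 2) := by
    rw [← exp_eq_one_add_add_phi_two_mul_sq, ← exp_add_of_commute_of_mem_ball (𝕂 := ℝ)
      (Commute.refl _) (by simp [expSeries_radius_eq_top]) (by simp [expSeries_radius_eq_top]),
      ← add_smul, add_halves]
  rw [integral_integral_integral_exp_sub_smul L τ (τ / 2), integral_exp_smul, sub_half, hsquare]
  simp only [mul_add, mul_one, mul_smul_comm, smul_mul_assoc, sq]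
  module

theorem stmt9 {X : Type*} [NormedAddCommGroup X] [NormedSpace ℝ X] [CompleteSpace X]
    (L : X →L[ℝ] X) (τ : ℝ) (hτ : 0 < τ) :
    τ • phi 1 (τ • L) - τ • NormedSpace.exp ((τ/2) • L) =
      (∫ s in (0:ℝ)..τ, ∫ σ in (0:ℝ)..s, ∫ ξ in (τ/2)..σ,
          (NormedSpace.exp ((τ - ξ) • L)).comp (L.comp L))
      + (τ^3/4) • ((NormedSpace.exp ((τ/2) • L)).comp
          ((phi 2 ((τ/2) • L)).comp (L.comp L))) :=
  stmt9_general L τ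
end

section
/- Let X be a real Banach space and L : X →L[ℝ] X a bounded linear operator. Then there exists a constant C ≥ 0 such that for all τ ∈ [0, 1], ‖τ·φ₁(τ·L) − τ·exp((τ/2)·L) − (τ³/24)·(L ∘ L)‖ ≤ C·τ⁴. -/
/-!
Expanding both series in powers of `L`, the coefficient of `L ^ k` in
`τ φ₁(τL) - τ exp(τL/2)` is `τ ^ (k + 1) (1/(k+1)! - 1/(2^k k!))`. It vanishes for
`k = 0, 1`, equals `τ³/24` for `k = 2`, and is at most `τ⁴/k!` in absolute value for
`k ≥ 3` when `0 ≤ τ ≤ 1`; summing against `‖L‖ ^ k` gives the bound with `C = exp ‖L‖`.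
-/

open scoped Nat

theorem norm_pow_le_of_norm_one_le {α : Type*} [SeminormedRing α] (h1 : ‖(1 : α)‖ ≤ 1)
    (a : α) (n : ℕ) : ‖a ^ n‖ ≤ ‖a‖ ^ n := by
  rcases n.eq_zero_or_pos with rfl | hn
  · simpa using h1
  · exact norm_pow_le' a hn

theorem norm_le_mul_exp_of_hasSum_smul_pow {A : Type*} [SeminormedRing A] [NormedAlgebra ℝ A]
    (h1 : ‖(1 : A)‖ ≤ 1) {a S : A} {c : ℕ → ℝ} {M : ℝ}
    (hS : HasSum (fun k => c k • a ^ k) S) (hc : ∀ k, |c k| ≤ M / k !) :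
    ‖S‖ ≤ M * Real.exp ‖a‖ := by
  have hexp : HasSum (fun k => M * (‖a‖ ^ k / k !)) (M * Real.exp ‖a‖) := by
    rw [Real.exp_eq_exp_ℝ]
    exact (NormedSpace.expSeries_div_hasSum_exp ‖a‖).mul_left M
  refine hS.norm_le_of_bounded hexp fun k => ?_
  calc ‖c k • a ^ k‖ = |c k| * ‖a ^ k‖ := by rw [norm_smul, Real.norm_eq_abs]
    _ ≤ M / k ! * ‖a‖ ^ k :=
        mul_le_mul (hc k) (norm_pow_le_of_norm_one_le h1 a k) (norm_nonneg _)
          ((abs_nonneg _).trans (hc k))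
    _ = M * (‖a‖ ^ k / k !) := by ring

noncomputable def phiExpCoeff (τ : ℝ) (k : ℕ) : ℝ :=
  τ ^ (k + 1) * (((1 + k)! : ℝ)⁻¹ - (k ! : ℝ)⁻¹ / 2 ^ k)

section

variable {X : Type*} [NormedAddCommGroup X] [NormedSpace ℝ X] [CompleteSpace X]

theorem hasSum_phi (ℓ : ℕ) (T : X →L[ℝ] X) :
    HasSum (fun k => (((ℓ + k)! : ℝ)⁻¹) • T ^ k) (phi ℓ T) := by
  refine (Summable.of_norm_bounded (Real.summable_pow_div_factorial ‖T‖) fun k => ?_).hasSum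
  rw [norm_smul, norm_inv, Real.norm_natCast, ← div_eq_inv_mul]
  gcongr
  · exact norm_pow_le_of_norm_one_le ContinuousLinearMap.norm_id_le T k
  · exact Nat.le_add_left k ℓ

theorem hasSum_smul_phi_one_sub_smul_exp (τ : ℝ) (L : X →L[ℝ] X) :
    HasSum (fun k => phiExpCoeff τ k • L ^ k)
      (τ • phi 1 (τ • L) - τ • NormedSpace.exp ((τ / 2) • L)) := by
  have hterm : ∀ k : ℕ, phiExpCoeff τ k • L ^ k =
      τ • (((1 + k)! : ℝ)⁻¹ • (τ • L) ^ k) - τ • ((k ! : ℝ)⁻¹ • ((τ / 2) • L) ^ k) := by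
    intro k
    simp only [phiExpCoeff, smul_pow, smul_smul, ← sub_smul, div_pow]
    congr 1
    ring
  simp only [hterm]
  exact ((hasSum_phi 1 (τ • L)).const_smul τ).sub
    ((NormedSpace.exp_series_hasSum_exp' ((τ / 2) • L)).const_smul τ)

end

theorem abs_phiExpCoeff_sub_le {τ : ℝ} (hτ : τ ∈ Set.Icc (0 : ℝ) 1) (k : ℕ) :
    |phiExpCoeff τ k - if k = 2 then τ ^ 3 / 24 else 0|
      ≤ τ ^ 4 / k ! := by
  obtain ⟨hτ0, hτ1⟩ := hτ
  unfold phiExpCoeff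
  rcases k with _ | _ | _ | n
  · norm_num; positivity
  · norm_num; positivity
  · norm_num [Nat.factorial]
    rw [← div_eq_mul_one_div, sub_self, abs_zero]
    positivity
  set k := n + 3
  have hphi : 0 ≤ ((1 + k)! : ℝ)⁻¹ ∧ ((1 + k)! : ℝ)⁻¹ ≤ (k ! : ℝ)⁻¹ :=
    ⟨by positivity, inv_anti₀ (by positivity) (mod_cast Nat.factorial_le (Nat.le_add_left k 1))⟩
  have hexp : 0 ≤ (k ! : ℝ)⁻¹ / 2 ^ k ∧ (k ! : ℝ)⁻¹ / 2 ^ k ≤ (k ! : ℝ)⁻¹ :=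
    ⟨by positivity, div_le_self (by positivity) (one_le_pow₀ one_le_two)⟩
  have hdiff : |((1 + k)! : ℝ)⁻¹ - (k ! : ℝ)⁻¹ / 2 ^ k| ≤ (k ! : ℝ)⁻¹ :=
    abs_sub_le_iff.2 ⟨by linarith, by linarith⟩
  have hτk : τ ^ (k + 1) ≤ τ ^ 4 := pow_le_pow_of_le_one hτ0 hτ1 (by omega)
  rw [if_neg (by omega), sub_zero, abs_mul, abs_of_nonneg (by positivity), div_eq_mul_inv]
  exact mul_le_mul hτk hdiff (abs_nonneg _) (by positivity)

theorem stmt12 {X : Type*} [NormedAddCommGroup X] [NormedSpace ℝ X] [CompleteSpace X]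
    (L : X →L[ℝ] X) :
    ∃ C : ℝ, 0 ≤ C ∧ ∀ τ ∈ Set.Icc (0:ℝ) 1,
      ‖τ • phi 1 (τ • L) - τ • NormedSpace.exp ((τ/2) • L)
        - (τ^3/24) • L.comp L‖ ≤ C * τ^4 := by
  refine ⟨Real.exp ‖L‖, (Real.exp_pos _).le, fun τ hτ => ?_⟩
  have hseries := (hasSum_smul_phi_one_sub_smul_exp τ L).sub
    (hasSum_ite_eq 2 ((τ ^ 3 / 24) • L ^ 2))
  have hterm : ∀ k : ℕ, (if k = 2 then (τ ^ 3 / 24) • L ^ 2 else 0) =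
      (if k = 2 then τ ^ 3 / 24 else 0) • L ^ k := by
    intro k
    split_ifs with hk
    · rw [hk]
    · rw [zero_smul]
  simp only [hterm, ← sub_smul] at hseries
  rw [mul_comm, ← ContinuousLinearMap.mul_def, ← sq]
  exact norm_le_mul_exp_of_hasSum_smul_pow ContinuousLinearMap.norm_id_le hseries
    (abs_phiExpCoeff_sub_le hτ)
end

section
/- Let X be a real Banach space and let A, B : X →L[ℝ] X be bounded linear operators that commute (A ∘ B = B ∘ A). Then there exists a constant C ≥ 0 such that for all τ ∈ [0, 1], ‖τ·φ₁(τ·(A+B)) − τ·φ₁(τ·A) ∘ φ₁(τ·B) − (τ³/12)·(B ∘ A)‖ ≤ C·τ⁴. -/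
/-!
Write `φ₁(T) = q(T) + R(T)` with `q(T) = 1 + T/2 + T²/6`. The tail estimate of the power series
gives `R(τ T) = O(τ³)` and `φ₁(τ T) = O(1)` uniformly for `|τ| ≤ 1`. For commuting `A`, `B` the
Taylor polynomials satisfy an exact identity: `τ q(τ(A+B)) - τ q(τA) q(τB) - (τ³/12) BA` equals
`-(τ⁴/12) AB(A+B) - (τ⁵/36) A²B²`, the `τ³` terms cancelling because `AB = BA`. What is left is `τ`
times a combination of products each containing a remainder factor, hence `O(τ⁴)`.
-/

open MeasureTheory intervalIntegral
open scoped Nat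

open Asymptotics Filter Finset Metric

noncomputable def phiTaylor {R : Type*} [Ring R] [Module ℝ R] (ℓ n : ℕ) (a : R) : R :=
  ∑ k ∈ range n, ((ℓ + k)! : ℝ)⁻¹ • a ^ k

theorem smul_phiTaylor_add_sub_smul_mul {R : Type*} [Ring R] [Algebra ℝ R] {a b : R}
    (hab : Commute a b) (τ : ℝ) :
    τ • phiTaylor 1 3 (τ • (a + b)) - τ • (phiTaylor 1 3 (τ • a) * phiTaylor 1 3 (τ • b))
      - (τ ^ 3 / 12) • (b * a)
      = -((τ ^ 4 / 12) • (a * b * (a + b)) + (τ ^ 5 / 36) • (a ^ 2 * b ^ 2)) := by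
  simp only [phiTaylor, sum_range_succ, sum_range_zero, smul_pow, Nat.factorial, pow_two,
    pow_one, pow_zero, add_mul, mul_add, smul_mul_assoc, mul_smul_comm, one_mul, mul_one,
    mul_assoc, smul_add, zero_add]
  rw [← hab.eq]
  push_cast
  module

section Phi

variable {X : Type*} [NormedAddCommGroup X] [NormedSpace ℝ X]

theorem ContinuousLinearMap.norm_pow_le_pow_norm (T : X →L[ℝ] X) (k : ℕ) : ‖T ^ k‖ ≤ ‖T‖ ^ k := by
  rcases k.eq_zero_or_pos with rfl | hk
  · rw [pow_zero, pow_zero]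
    exact norm_id_le
  · exact norm_pow_le' T hk

theorem Real.hasSum_pow_div_factorial (x : ℝ) : HasSum (fun n ↦ x ^ n / n !) (Real.exp x) := by
  rw [Real.exp_eq_exp_ℝ]
  exact NormedSpace.expSeries_div_hasSum_exp x

theorem norm_phi_term_le (ℓ k : ℕ) (T : X →L[ℝ] X) :
    ‖((ℓ + k)! : ℝ)⁻¹ • T ^ k‖ ≤ ‖T‖ ^ k / k ! := by
  rw [norm_smul, norm_inv, Real.norm_natCast, inv_mul_eq_div]
  gcongr
  · exact T.norm_pow_le_pow_norm k
  · omega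

theorem summable_norm_phi_term (ℓ : ℕ) (T : X →L[ℝ] X) :
    Summable fun k ↦ ‖((ℓ + k)! : ℝ)⁻¹ • T ^ k‖ :=
  .of_nonneg_of_le (fun _ ↦ norm_nonneg _) (norm_phi_term_le ℓ · T)
    (Real.summable_pow_div_factorial _)

variable [CompleteSpace X]

theorem norm_phi_sub_phiTaylor_le (ℓ n : ℕ) (T : X →L[ℝ] X) :
    ‖phi ℓ T - phiTaylor ℓ n T‖ ≤ ‖T‖ ^ n * Real.exp ‖T‖ := by
  have hsum := summable_norm_phi_term ℓ T
  rw [phi, phiTaylor, ← hsum.of_norm.sum_add_tsum_nat_add n, add_sub_cancel_left]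
  calc ‖∑' i, ((ℓ + (i + n))! : ℝ)⁻¹ • T ^ (i + n)‖
      ≤ ∑' i, ‖T‖ ^ n * (‖T‖ ^ i / i !) := by
        refine tsum_of_norm_bounded
          ((Real.summable_pow_div_factorial _).mul_left _).hasSum fun i ↦ ?_
        calc _ ≤ ‖T‖ ^ (i + n) / (i + n)! := norm_phi_term_le ℓ (i + n) T
          _ ≤ ‖T‖ ^ (i + n) / i ! := by gcongr; omega
          _ = _ := by ring
    _ = ‖T‖ ^ n * Real.exp ‖T‖ := by rw [tsum_mul_left, (Real.hasSum_pow_div_factorial _).tsum_eq]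

theorem isBigO_phi_smul_sub_phiTaylor (ℓ n : ℕ) (T : X →L[ℝ] X) :
    (fun τ : ℝ ↦ phi ℓ (τ • T) - phiTaylor ℓ n (τ • T)) =O[𝓟 (closedBall 0 1)] fun τ ↦ τ ^ n := by
  refine isBigO_principal.2 ⟨‖T‖ ^ n * Real.exp ‖T‖, fun τ hτ ↦ ?_⟩
  rw [mem_closedBall_zero_iff] at hτ
  have hτT : ‖τ • T‖ ≤ ‖T‖ := by
    rw [norm_smul]; exact mul_le_of_le_one_left (norm_nonneg _) hτ
  calc _ ≤ ‖τ • T‖ ^ n * Real.exp ‖τ • T‖ := norm_phi_sub_phiTaylor_le ℓ n (τ • T)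
    _ = ‖τ‖ ^ n * ‖T‖ ^ n * Real.exp ‖τ • T‖ := by rw [norm_smul, mul_pow]
    _ ≤ ‖τ‖ ^ n * ‖T‖ ^ n * Real.exp ‖T‖ := by gcongr
    _ = ‖T‖ ^ n * Real.exp ‖T‖ * ‖τ ^ n‖ := by rw [norm_pow]; ring

theorem isBigO_phi_smul (ℓ : ℕ) (T : X →L[ℝ] X) :
    (fun τ : ℝ ↦ phi ℓ (τ • T)) =O[𝓟 (closedBall 0 1)] fun _ ↦ (1 : ℝ) := by
  simpa [phiTaylor] using isBigO_phi_smul_sub_phiTaylor ℓ 0 T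

end Phi

theorem isBigO_pow_one (n : ℕ) :
    (fun τ : ℝ ↦ τ ^ n) =O[𝓟 (closedBall 0 1)] fun _ ↦ (1 : ℝ) :=
  isBigO_principal.2 ⟨1, fun τ hτ ↦ by
    simpa using pow_le_one₀ (norm_nonneg τ) (mem_closedBall_zero_iff.1 hτ)⟩

theorem isBigO_smul_pow_four_add_smul_pow_five {E : Type*} [NormedAddCommGroup E] [NormedSpace ℝ E]
    (u v : E) :
    (fun τ : ℝ ↦ (τ ^ 4 / 12) • u + (τ ^ 5 / 36) • v) =O[𝓟 (closedBall 0 1)] fun τ ↦ τ ^ 4 := by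
  refine isBigO_principal.2 ⟨‖u‖ / 12 + ‖v‖ / 36, fun τ hτ ↦ ?_⟩
  rw [mem_closedBall_zero_iff] at hτ
  have h54 : ‖τ‖ ^ 5 ≤ ‖τ‖ ^ 4 := pow_le_pow_of_le_one (norm_nonneg τ) hτ (by norm_num)
  calc _ ≤ ‖τ‖ ^ 4 / 12 * ‖u‖ + ‖τ‖ ^ 5 / 36 * ‖v‖ := by
        refine (norm_add_le _ _).trans_eq ?_
        simp only [norm_smul, norm_div, norm_pow, Real.norm_ofNat]
    _ ≤ ‖τ‖ ^ 4 / 12 * ‖u‖ + ‖τ‖ ^ 4 / 36 * ‖v‖ := by gcongr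
    _ = (‖u‖ / 12 + ‖v‖ / 36) * ‖τ ^ 4‖ := by rw [norm_pow]; ring

theorem stmt16 {X : Type*} [NormedAddCommGroup X] [NormedSpace ℝ X] [CompleteSpace X]
    (A B : X →L[ℝ] X) (hcomm : A.comp B = B.comp A) :
    ∃ C : ℝ, 0 ≤ C ∧ ∀ τ ∈ Set.Icc (0:ℝ) 1,
      ‖τ • phi 1 (τ • (A + B)) - τ • (phi 1 (τ • A)).comp (phi 1 (τ • B))
        - (τ^3/12) • B.comp A‖ ≤ C * τ^4 := by
  have hAB : Commute A B := hcomm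
  set R : (X →L[ℝ] X) → ℝ → X →L[ℝ] X := fun T τ ↦ phi 1 (τ • T) - phiTaylor 1 3 (τ • T)
  have hdecomp : ∀ τ : ℝ, τ • phi 1 (τ • (A + B)) - τ • (phi 1 (τ • A)).comp (phi 1 (τ • B))
        - (τ^3/12) • B.comp A
      = -((τ ^ 4 / 12) • (A * B * (A + B)) + (τ ^ 5 / 36) • (A ^ 2 * B ^ 2))
        + τ • (R (A + B) τ - (R A τ * phi 1 (τ • B) + phi 1 (τ • A) * R B τ - R A τ * R B τ)) := by
    intro τ
    rw [← smul_phiTaylor_add_sub_smul_mul hAB τ]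
    simp only [R, ← ContinuousLinearMap.mul_def, sub_mul, mul_sub]
    module
  have hR : ∀ T, R T =O[𝓟 (closedBall 0 1)] fun τ ↦ τ ^ 3 :=
    isBigO_phi_smul_sub_phiTaylor 1 3
  have hRA_phiB : (fun τ ↦ R A τ * phi 1 (τ • B)) =O[𝓟 (closedBall 0 1)] fun τ ↦ τ ^ 3 := by
    simpa using (hR A).mul (isBigO_phi_smul 1 B)
  have hphiA_RB : (fun τ ↦ phi 1 (τ • A) * R B τ) =O[𝓟 (closedBall 0 1)] fun τ ↦ τ ^ 3 := by
    simpa using (isBigO_phi_smul 1 A).mul (hR B)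
  have hRA_RB : (fun τ ↦ R A τ * R B τ) =O[𝓟 (closedBall 0 1)] fun τ ↦ τ ^ 3 := by
    simpa using (hR A).mul ((hR B).trans (isBigO_pow_one 3))
  have hrem : (fun τ : ℝ ↦ τ • (R (A + B) τ
      - (R A τ * phi 1 (τ • B) + phi 1 (τ • A) * R B τ - R A τ * R B τ)))
      =O[𝓟 (closedBall 0 1)] fun τ ↦ τ ^ 4 :=
    ((isBigO_refl (fun τ : ℝ ↦ τ) _).smul
      ((hR (A + B)).sub ((hRA_phiB.add hphiA_RB).sub hRA_RB))).congr_right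
      fun τ ↦ by rw [smul_eq_mul]; ring
  have hbig := ((isBigO_smul_pow_four_add_smul_pow_five _ _).neg_left.add hrem).congr_left
    fun τ ↦ (hdecomp τ).symm
  obtain ⟨C, hC, hCbound⟩ := hbig.exists_nonneg
  refine ⟨C, hC, fun τ ⟨h0, h1⟩ ↦ ?_⟩
  have hτ : τ ∈ closedBall (0 : ℝ) 1 := by rwa [mem_closedBall_zero_iff, Real.norm_of_nonneg h0]
  simpa [abs_of_nonneg h0] using isBigOWith_principal.1 hCbound τ hτ
end

section
/- Define φ₁ : ℝ → ℝ by φ₁(x) = (e^x − 1)/x for x ≠ 0 and φ₁(0) = 1 (equivalently, φ₁(x) = ∑_{k=0}^{∞} x^k/(k+1)!), and define the stability function R(a, b) = 1 + φ₁(a)·φ₁(b)·(a + b). Then for all real numbers a ≤ 0 and b ≤ 0, one has |R(a, b)| ≤ 1. -/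
/-- The scalar function `φ₁(x) = (e^x - 1)/x` for `x ≠ 0`, with `φ₁(0) = 1`. -/
noncomputable def phi1 (x : ℝ) : ℝ := if x = 0 then 1 else (Real.exp x - 1) / x

/-- The linear-stability function of the split integrator ERK2. -/
noncomputable def Rstab (a b : ℝ) : ℝ := 1 + phi1 a * phi1 b * (a + b)

lemma phi1_mul (x : ℝ) : phi1 x * x = Real.exp x - 1 := by
  unfold phi1
  by_cases h : x = 0
  · simp [h]
  · rw [if_neg h, div_mul_cancel₀ _ h]

lemma phi1_pos {x : ℝ} (hx : x ≤ 0) : 0 < phi1 x := by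
  unfold phi1
  rcases eq_or_lt_of_le hx with h | h
  · rw [if_pos h]; norm_num
  · rw [if_neg h.ne]
    apply div_pos_of_neg_of_neg
    · linarith [Real.exp_lt_one_iff.mpr h]
    · exact h

lemma phi1_le_one {x : ℝ} (hx : x ≤ 0) : phi1 x ≤ 1 := by
  unfold phi1
  rcases eq_or_lt_of_le hx with h | h
  · rw [if_pos h]
  · rw [if_neg h.ne, div_le_iff_of_neg h]
    linarith [Real.add_one_le_exp x]

theorem stmt19 : ∀ a b : ℝ, a ≤ 0 → b ≤ 0 → |Rstab a b| ≤ 1 := by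
  intro a b ha hb
  have hpa := phi1_pos ha
  have hpb := phi1_pos hb
  have hla := phi1_le_one ha
  have hlb := phi1_le_one hb
  have hea : Real.exp a - 1 ≤ 0 := by linarith [Real.exp_le_one_iff.mpr ha]
  have heb : Real.exp b - 1 ≤ 0 := by linarith [Real.exp_le_one_iff.mpr hb]
  have hea' : -1 < Real.exp a - 1 := by linarith [Real.exp_pos a]
  have heb' : -1 < Real.exp b - 1 := by linarith [Real.exp_pos b]
  have key : phi1 a * phi1 b * (a + b)
      = phi1 b * (Real.exp a - 1) + phi1 a * (Real.exp b - 1) := by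
    rw [← phi1_mul a, ← phi1_mul b]; ring
  rw [abs_le]
  constructor
  · have h1 : phi1 b * (Real.exp a - 1) ≥ Real.exp a - 1 := by nlinarith
    have h2 : phi1 a * (Real.exp b - 1) ≥ Real.exp b - 1 := by nlinarith
    unfold Rstab; rw [key]; nlinarith
  · have : phi1 a * phi1 b * (a + b) ≤ 0 := by
      apply mul_nonpos_of_nonneg_of_nonpos
      · positivity
      · linarith
    unfold Rstab; linarith
end
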